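/- Let γ ⊂ ℝ^d be locally finite and satisfy the density condition with constant a > 0 for interaction radius r > 0. Then for every α > 0 the family (n_{x,r}(γ)² e^{−α|x|})_{x ∈ γ} is summable, i.e. ∑_{x∈γ} n_{x,r}(γ)² e^{−α|x|} < ∞. -/

import Mathlib

/-!
Squaring the density condition gives `n_x² ≤ a² (1 + |x|)`. A volume-packing argument bounds the
number of points of `γ` in `B(0, R)`: their balls `B(x, r)` lie in `B(0, R + r)` and cover each
point `z` at most `n_{z,r} ≤ a √(1 + R + r)` times, so there are `O(R^(d+1))` of them. Grouping the
points by `⌊|x|⌋ = n` then bounds the sum by `∑ₙ poly(n) e^(-αn) < ∞`.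
-/

open scoped BigOperators

noncomputable section

/-- The finite set `γ_{x,r} = {y ∈ γ : |x - y| < r}` of points of `γ` within
distance `r` of `x`, given local finiteness of `γ`. -/
def nbhd {d : ℕ} (γ : Set (EuclideanSpace ℝ (Fin d)))
    (hLF : ∀ (x : EuclideanSpace ℝ (Fin d)) (R : ℝ), {y ∈ γ | dist x y < R}.Finite)
    (r : ℝ) (x : EuclideanSpace ℝ (Fin d)) : Finset (EuclideanSpace ℝ (Fin d)) :=
  (hLF x r).toFinset

/-- `n_{x,r}(γ)`, the number of points of `γ` within distance `r` of `x`. -/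
def npts {d : ℕ} (γ : Set (EuclideanSpace ℝ (Fin d)))
    (hLF : ∀ (x : EuclideanSpace ℝ (Fin d)) (R : ℝ), {y ∈ γ | dist x y < R}.Finite)
    (r : ℝ) (x : EuclideanSpace ℝ (Fin d)) : ℕ :=
  (nbhd γ hLF r x).card

/-- `V̄_x(q) = ∑_{y ∈ γ_{x,r}} V_{xy}(q_x, q_y)`. -/
def Vbar {d : ℕ} (γ : Set (EuclideanSpace ℝ (Fin d)))
    (hLF : ∀ (x : EuclideanSpace ℝ (Fin d)) (R : ℝ), {y ∈ γ | dist x y < R}.Finite)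
    (V : EuclideanSpace ℝ (Fin d) → EuclideanSpace ℝ (Fin d) → ℝ → ℝ → ℝ)
    (r : ℝ) (q : EuclideanSpace ℝ (Fin d) → ℝ) (x : EuclideanSpace ℝ (Fin d)) : ℝ :=
  ∑ y ∈ nbhd γ hLF r x, V x y (q x) (q y)

open MeasureTheory Metric Finset Module
open scoped ENNReal

theorem card_mul_pow_le_of_card_dist_lt_le {E : Type*} [NormedAddCommGroup E] [NormedSpace ℝ E]
    [FiniteDimensional ℝ E] (S : Finset E) {R r N : ℝ} (hR : 0 ≤ R) (hr : 0 < r) (hN : 0 ≤ N)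
    (hS : ∀ x ∈ S, ‖x‖ < R)
    (hmult : ∀ z : E, ‖z‖ < R + r → (#{x ∈ S | dist z x < r} : ℝ) ≤ N) :
    (#S : ℝ) * r ^ finrank ℝ E ≤ N * (R + r) ^ finrank ℝ E := by
  classical
  borelize E
  set μ : Measure E := Measure.addHaar
  have hcount (z : E) : ∑ x ∈ S, (ball x r).indicator 1 z = (#{x ∈ S | dist z x < r} : ℝ≥0∞) := by
    simp [Set.indicator_apply, Finset.sum_boole, mem_ball]
  have hcover (z : E) : ∑ x ∈ S, (ball x r).indicator 1 z
      ≤ (ball (0 : E) (R + r)).indicator (fun _ => ENNReal.ofReal N) z := by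
    rw [hcount]
    by_cases hz : ‖z‖ < R + r
    · rw [Set.indicator_of_mem (mem_ball_zero_iff.mpr hz), ← ENNReal.ofReal_natCast]
      exact ENNReal.ofReal_le_ofReal (hmult z hz)
    · have hempty : {x ∈ S | dist z x < r} = ∅ := by
        refine Finset.filter_false_of_mem fun x hx hzx => hz ?_
        calc ‖z‖ ≤ ‖x‖ + dist z x := by simpa [dist_eq_norm] using norm_le_norm_add_norm_sub' z x
          _ < R + r := by linarith [hS x hx]
      simp [hempty]
  have key : (#S : ℝ≥0∞) * μ (ball 0 r) ≤ ENNReal.ofReal N * μ (ball 0 (R + r)) :=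
    calc (#S : ℝ≥0∞) * μ (ball 0 r) = ∑ x ∈ S, μ (ball x r) := by
          simp [Measure.addHaar_ball_center]
      _ = ∫⁻ z, ∑ x ∈ S, (ball x r).indicator 1 z ∂μ := by
          rw [lintegral_finsetSum _ fun x _ => measurable_one.indicator measurableSet_ball]
          simp [lintegral_indicator_one measurableSet_ball]
      _ ≤ ∫⁻ z, (ball (0 : E) (R + r)).indicator (fun _ => ENNReal.ofReal N) z ∂μ :=
          lintegral_mono hcover
      _ = ENNReal.ofReal N * μ (ball 0 (R + r)) := lintegral_indicator_const measurableSet_ball _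
  -- both balls have measure `radius ^ finrank ℝ E * μ (ball 0 1)`, and `0 < μ (ball 0 1) < ∞`
  rw [Measure.addHaar_ball_of_pos μ _ hr, Measure.addHaar_ball_of_pos μ (r := R + r) _ (by linarith),
    ← mul_assoc, ← mul_assoc, ENNReal.mul_le_mul_iff_left (measure_ball_pos μ _ one_pos).ne'
      measure_ball_lt_top.ne, ← ENNReal.ofReal_natCast, ← ENNReal.ofReal_mul (by positivity),
    ← ENNReal.ofReal_mul hN, ENNReal.ofReal_le_ofReal_iff (by positivity)] at key
  exact key

theorem summable_of_le_comp_of_card_fiber_le {ι κ : Type*} {f : ι → ℝ} (hf : 0 ≤ f) (φ : ι → κ)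
    {b c : κ → ℝ} (hb : 0 ≤ b) (hfb : ∀ i, f i ≤ b (φ i))
    (hc : ∀ k (u : Finset ι), (∀ i ∈ u, φ i = k) → (#u : ℝ) ≤ c k)
    (hcb : Summable fun k => c k * b k) : Summable f := by
  classical
  have hcb_nonneg (k : κ) : 0 ≤ c k * b k :=
    mul_nonneg ((Nat.cast_nonneg _).trans (hc k ∅ (by simp))) (hb k)
  refine summable_of_sum_le (c := ∑' k, c k * b k) hf fun u => ?_
  calc ∑ i ∈ u, f i = ∑ k ∈ u.image φ, ∑ i ∈ u with φ i = k, f i :=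
        (sum_fiberwise_of_maps_to (fun i hi => mem_image_of_mem φ hi) f).symm
    _ ≤ ∑ k ∈ u.image φ, c k * b k := by
        refine sum_le_sum fun k _ => ?_
        calc ∑ i ∈ u with φ i = k, f i ≤ ∑ i ∈ u with φ i = k, b k :=
              sum_le_sum fun i hi => (mem_filter.mp hi).2 ▸ hfb i
          _ ≤ c k * b k := by
              rw [sum_const, nsmul_eq_mul]
              exact mul_le_mul_of_nonneg_right (hc k _ fun i hi => (mem_filter.mp hi).2) (hb k)
    _ ≤ ∑' k, c k * b k := hcb.sum_le_tsum _ fun k _ => hcb_nonneg k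

theorem Real.summable_add_pow_mul_exp_neg_nat_mul (k : ℕ) {s α : ℝ} (hs : 0 ≤ s) (hα : 0 < α) :
    Summable fun n : ℕ => (n + s) ^ k * Real.exp (-α * n) := by
  have hshift := ((summable_nat_add_iff 1).mpr (Real.summable_pow_mul_exp_neg_nat_mul k hα)).mul_left
    ((1 + s) ^ k * Real.exp α)
  refine hshift.of_nonneg_of_le (fun n => by positivity) fun n => ?_
  have hle : (n : ℝ) + s ≤ (1 + s) * ((n + 1 : ℕ) : ℝ) := by
    push_cast
    nlinarith [n.cast_nonneg (α := ℝ)]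
  calc (n + s) ^ k * Real.exp (-α * n)
      ≤ ((1 + s) * ((n + 1 : ℕ) : ℝ)) ^ k * Real.exp (-α * n) := by gcongr
    _ = (1 + s) ^ k * Real.exp α * (((n + 1 : ℕ) : ℝ) ^ k * Real.exp (-α * ((n + 1 : ℕ) : ℝ))) := by
        rw [mul_pow, mul_mul_mul_comm, ← Real.exp_add]; push_cast; ring_nf

section Density

variable {d : ℕ} {γ : Set (EuclideanSpace ℝ (Fin d))}
  {hLF : ∀ (x : EuclideanSpace ℝ (Fin d)) (R : ℝ), {y ∈ γ | dist x y < R}.Finite} {r a : ℝ}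

theorem npts_sq_le (hden : ∀ x, (npts γ hLF r x : ℝ) ≤ a * Real.sqrt (1 + ‖x‖))
    (x : EuclideanSpace ℝ (Fin d)) : (npts γ hLF r x : ℝ) ^ 2 ≤ a ^ 2 * (1 + ‖x‖) := by
  calc (npts γ hLF r x : ℝ) ^ 2 ≤ (a * Real.sqrt (1 + ‖x‖)) ^ 2 := by gcongr; exact hden x
    _ = a ^ 2 * (1 + ‖x‖) := by rw [mul_pow, Real.sq_sqrt (by positivity)]

theorem card_mul_pow_le_of_npts_le (hden : ∀ x, (npts γ hLF r x : ℝ) ≤ a * Real.sqrt (1 + ‖x‖))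
    (hr : 0 < r) {S : Finset (EuclideanSpace ℝ (Fin d))} (hSγ : ↑S ⊆ γ) {R : ℝ} (hR : 0 ≤ R)
    (hS : ∀ x ∈ S, ‖x‖ < R) : (#S : ℝ) * r ^ d ≤ a * (1 + R + r) ^ (d + 1) := by
  have ha : 0 ≤ a := by simpa using (Nat.cast_nonneg _).trans (hden 0)
  have hsqrt : Real.sqrt (1 + (R + r)) ≤ 1 + R + r := by
    rw [Real.sqrt_le_left (by positivity)]; nlinarith
  have hpack := card_mul_pow_le_of_card_dist_lt_le S hR hr (by positivity : 0 ≤ a * (1 + R + r))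
    hS fun z hz => ?_
  · rw [finrank_euclideanSpace_fin] at hpack
    calc (#S : ℝ) * r ^ d ≤ a * (1 + R + r) * (R + r) ^ d := hpack
      _ ≤ a * (1 + R + r) * (1 + R + r) ^ d := by gcongr; linarith
      _ = a * (1 + R + r) ^ (d + 1) := by ring
  · have hsub : {x ∈ S | dist z x < r} ⊆ nbhd γ hLF r z := fun x hx => by
      rw [mem_filter] at hx
      simpa [nbhd] using ⟨hSγ hx.1, hx.2⟩
    calc (#{x ∈ S | dist z x < r} : ℝ) ≤ npts γ hLF r z := by exact_mod_cast card_le_card hsub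
      _ ≤ a * Real.sqrt (1 + ‖z‖) := hden z
      _ ≤ a * (1 + R + r) := by gcongr; exact hsqrt.trans' (by gcongr)

theorem npts_sq_mul_exp_le (hden : ∀ x, (npts γ hLF r x : ℝ) ≤ a * Real.sqrt (1 + ‖x‖))
    (hr : 0 ≤ r) {α : ℝ} (hα : 0 ≤ α) (x : EuclideanSpace ℝ (Fin d)) :
    (npts γ hLF r x : ℝ) ^ 2 * Real.exp (-α * ‖x‖)
      ≤ a ^ 2 * (⌊‖x‖⌋₊ + 2 + r) * Real.exp (-α * ⌊‖x‖⌋₊) := by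
  have hlow := Nat.floor_le (norm_nonneg x)
  have hup := Nat.lt_floor_add_one ‖x‖
  calc (npts γ hLF r x : ℝ) ^ 2 * Real.exp (-α * ‖x‖)
      ≤ a ^ 2 * (1 + ‖x‖) * Real.exp (-α * ⌊‖x‖⌋₊) := by
        refine mul_le_mul (npts_sq_le hden x) (Real.exp_le_exp.2 ?_) (by positivity) (by positivity)
        exact mul_le_mul_of_nonpos_left hlow (by linarith)
    _ ≤ a ^ 2 * (⌊‖x‖⌋₊ + 2 + r) * Real.exp (-α * ⌊‖x‖⌋₊) := by
        gcongr a ^ 2 * ?_ * _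
        linarith

theorem card_le_of_forall_floor_norm_eq
    (hden : ∀ x, (npts γ hLF r x : ℝ) ≤ a * Real.sqrt (1 + ‖x‖)) (hr : 0 < r) {n : ℕ}
    {u : Finset γ} (hu : ∀ x ∈ u, ⌊‖(x : EuclideanSpace ℝ (Fin d))‖⌋₊ = n) :
    (#u : ℝ) ≤ a * (n + 2 + r) ^ (d + 1) / r ^ d := by
  have hS := card_mul_pow_le_of_npts_le hden hr (S := u.map (Function.Embedding.subtype _))
    (R := n + 1) (fun y hy => ?_) (by positivity) fun y hy => ?_
  · rw [card_map] at hS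
    rw [le_div_iff₀ (by positivity)]
    exact hS.trans_eq (by ring)
  · obtain ⟨x, -, rfl⟩ := mem_map.mp hy
    exact x.2
  · obtain ⟨x, hx, rfl⟩ := mem_map.mp hy
    rw [← hu x hx]
    exact Nat.lt_floor_add_one _

end Density

theorem statement4_general {d : ℕ} (γ : Set (EuclideanSpace ℝ (Fin d)))
    (hLF : ∀ (x : EuclideanSpace ℝ (Fin d)) (R : ℝ), {y ∈ γ | dist x y < R}.Finite)
    (r a : ℝ) (hr : 0 < r)
    (hden : ∀ x : EuclideanSpace ℝ (Fin d),
      (npts γ hLF r x : ℝ) ≤ a * Real.sqrt (1 + ‖x‖))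
    (α : ℝ) (hα : 0 < α) :
    Summable (fun x : γ =>
      ((npts γ hLF r x : ℝ)) ^ 2 * Real.exp (-α * ‖(x : EuclideanSpace ℝ (Fin d))‖)) := by
  have hpoly : Summable fun n : ℕ =>
      a * (n + 2 + r) ^ (d + 1) / r ^ d * (a ^ 2 * (n + 2 + r) * Real.exp (-α * n)) :=
    ((Real.summable_add_pow_mul_exp_neg_nat_mul (d + 2) (by positivity : 0 ≤ 2 + r) hα).mul_left
      (a ^ 3 / r ^ d)).congr fun n => by ring
  exact summable_of_le_comp_of_card_fiber_le (fun x => by positivity)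
    (fun x : γ => ⌊‖(x : EuclideanSpace ℝ (Fin d))‖⌋₊) (fun n => by positivity)
    (fun x => npts_sq_mul_exp_le hden hr.le hα.le x)
    (fun _ _ => card_le_of_forall_floor_norm_eq hden hr) hpoly

theorem statement4 {d : ℕ} (hd : 1 ≤ d) (γ : Set (EuclideanSpace ℝ (Fin d)))
    (hcount : γ.Countable)
    (hLF : ∀ (x : EuclideanSpace ℝ (Fin d)) (R : ℝ), {y ∈ γ | dist x y < R}.Finite)
    (r a : ℝ) (hr : 0 < r) (ha : 0 < a)
    (hden : ∀ x : EuclideanSpace ℝ (Fin d),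
      (npts γ hLF r x : ℝ) ≤ a * Real.sqrt (1 + ‖x‖))
    (α : ℝ) (hα : 0 < α) :
    Summable (fun x : γ =>
      ((npts γ hLF r x : ℝ)) ^ 2 * Real.exp (-α * ‖(x : EuclideanSpace ℝ (Fin d))‖)) :=
  statement4_general γ hLF r a hr hden α hα
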